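/- Suppose K(s,t) ≥ 0 a.e. in [0,T]², Σ_{i=1}^p B_{ij}(t) > 0 a.e. in [0,T] for each j, and there is σ > 0 such that for a.e. t, B_{ij}(t) ≠ 0 implies B_{ij}(t) ≥ σ. Let w be a feasible solution of (DCLP_ε) and define ŵ_i(t) = min{ w_i(t), ρ_ε(t) }, where ρ_ε(t) = ((τ−ε)/σ)exp(ν(T−t)/σ). Then ŵ is also a feasible solution of (DCLP_ε), with ŵ(t) ≤ w(t) and ŵ(t) ≤ ρ_ε(t)·𝟙 for all t ∈ [0,T]. -/

import Mathlib

open MeasureTheory Set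

/-!
If no `i` with `B t i j ≠ 0` is actually cut off at time `t`, the right-hand side of the `j`-th
constraint is unchanged, while the integral can only decrease because `K ≥ 0`. Otherwise some
`B t i j ≥ σ` multiplies `ρ_ε(t)`, so the right-hand side is at least `σ ρ_ε(t)`. Since `ρ_ε` solves
`σ ρ(t) = (τ - ε) + ∫ₜᵀ ν ρ(s) ds` and `∑ᵢ |K s t i j| ≤ ν`, the left-hand side is then at most
`a t j - τ + σ ρ_ε(t) ≤ σ ρ_ε(t)`.
-/

theorem setIntegral_Icc_mul_exp_eq {T t σ ν c : ℝ} (hσ : σ ≠ 0) (ht : t ≤ T) :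
    ∫ s in Icc t T, ν * (c / σ * Real.exp (ν * (T - s) / σ)) =
      σ * (c / σ * Real.exp (ν * (T - t) / σ)) - c := by
  have hderiv : ∀ s ∈ uIcc t T, HasDerivAt (fun u => -c * Real.exp (ν * (T - u) / σ))
      (ν * (c / σ * Real.exp (ν * (T - s) / σ))) s := by
    intro s _
    have hlin : HasDerivAt (fun u : ℝ => ν * (T - u) / σ) (-(ν / σ)) s := by
      simpa [neg_div] using (((hasDerivAt_id s).const_sub T).const_mul ν).div_const σ
    refine (hlin.exp.const_mul (-c)).congr_deriv ?_
    field_simp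
  rw [integral_Icc_eq_integral_Ioc, ← intervalIntegral.integral_of_le ht,
    intervalIntegral.integral_eq_sub_of_hasDerivAt hderiv
      (Continuous.intervalIntegrable (by fun_prop) _ _)]
  simp only [sub_self, mul_zero, zero_div, Real.exp_zero]
  field_simp
  ring

theorem min_sum_mul_le_sum_mul_min {ι : Type*} (s : Finset ι) {B w : ι → ℝ} {σ r : ℝ}
    (hσ : 0 ≤ σ) (hBσ : ∀ i ∈ s, B i ≠ 0 → σ ≤ B i) (hw : ∀ i ∈ s, 0 ≤ w i) (hr : 0 ≤ r) :
    min (∑ i ∈ s, B i * w i) (σ * r) ≤ ∑ i ∈ s, B i * min (w i) r := by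
  have hB : ∀ i ∈ s, 0 ≤ B i := fun i hi => by
    by_cases h : B i = 0
    · exact h.ge
    · exact hσ.trans (hBσ i hi h)
  by_cases hcut : ∃ i ∈ s, B i ≠ 0 ∧ r < w i
  · obtain ⟨i, hi, hBi, hri⟩ := hcut
    calc min (∑ i ∈ s, B i * w i) (σ * r) ≤ σ * r := min_le_right _ _
      _ ≤ B i * min (w i) r := by
        rw [min_eq_right hri.le]
        exact mul_le_mul_of_nonneg_right (hBσ i hi hBi) hr
      _ ≤ ∑ i ∈ s, B i * min (w i) r :=
        Finset.single_le_sum (fun k hk => mul_nonneg (hB k hk) (le_min (hw k hk) hr)) hi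
  · push Not at hcut
    refine (min_le_left _ _).trans_eq (Finset.sum_congr rfl fun i hi => ?_)
    by_cases hBi : B i = 0
    · simp [hBi]
    · rw [min_eq_left (hcut i hi hBi)]

theorem ae_ae_of_ae_prod_swap {α β : Type*} [MeasurableSpace α] [MeasurableSpace β]
    {μ : Measure α} {ν : Measure β} [SFinite μ] [SFinite ν] {p : α × β → Prop}
    (h : ∀ᵐ z ∂μ.prod ν, p z) : ∀ᵐ y ∂ν, ∀ᵐ x ∂μ, p (x, y) :=
  Measure.ae_ae_of_ae_prod (Measure.measurePreserving_swap.quasiMeasurePreserving.ae h)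

theorem integral_sum_mul_min_le {α ι : Type*} [MeasurableSpace α] {μ : Measure α}
    (s : Finset ι) {f g : ι → α → ℝ} {h : α → ℝ} {ν : ℝ}
    (hf : ∀ i ∈ s, AEStronglyMeasurable (f i) μ) (hf0 : ∀ᵐ x ∂μ, ∀ i ∈ s, 0 ≤ f i x)
    (hfν : ∀ᵐ x ∂μ, ∑ i ∈ s, |f i x| ≤ ν) (hg : ∀ i ∈ s, Integrable (g i) μ)
    (hh : Integrable h μ) (hh0 : ∀ᵐ x ∂μ, 0 ≤ h x) :
    ∫ x, ∑ i ∈ s, f i x * min (g i x) (h x) ∂μ ≤ ∫ x, ∑ i ∈ s, f i x * g i x ∂μ ∧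
      ∫ x, ∑ i ∈ s, f i x * min (g i x) (h x) ∂μ ≤ ∫ x, ν * h x ∂μ := by
  have hbound : ∀ i ∈ s, ∀ᵐ x ∂μ, ‖f i x‖ ≤ ν := fun i hi => by
    filter_upwards [hfν] with x hx
    exact (Finset.single_le_sum (f := fun k => |f k x|) (fun k _ => abs_nonneg _) hi).trans hx
  have hint_min : Integrable (fun x => ∑ i ∈ s, f i x * min (g i x) (h x)) μ :=
    integrable_finsetSum _ fun i hi => ((hg i hi).inf hh).bdd_mul (hf i hi) (hbound i hi)
  have hint : Integrable (fun x => ∑ i ∈ s, f i x * g i x) μ :=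
    integrable_finsetSum _ fun i hi => (hg i hi).bdd_mul (hf i hi) (hbound i hi)
  refine ⟨integral_mono_ae hint_min hint ?_, integral_mono_ae hint_min (hh.const_mul ν) ?_⟩
  · filter_upwards [hf0] with x hx
    exact Finset.sum_le_sum fun i hi => mul_le_mul_of_nonneg_left (min_le_left _ _) (hx i hi)
  · filter_upwards [hf0, hfν, hh0] with x hx hxν hxh
    calc ∑ i ∈ s, f i x * min (g i x) (h x) ≤ ∑ i ∈ s, f i x * h x :=
          Finset.sum_le_sum fun i hi => mul_le_mul_of_nonneg_left (min_le_right _ _) (hx i hi)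
      _ = (∑ i ∈ s, |f i x|) * h x := by
          rw [Finset.sum_mul]
          exact Finset.sum_congr rfl fun i hi => by rw [abs_of_nonneg (hx i hi)]
      _ ≤ ν * h x := mul_le_mul_of_nonneg_right hxν hxh

theorem dual_truncation_feasible_general (T : ℝ) (p q : ℕ)
    (a : ℝ → Fin q → ℝ) (B : ℝ → Fin p → Fin q → ℝ)
    (K : ℝ → ℝ → Fin p → Fin q → ℝ)
    (ε σ τ ν : ℝ) (hσ : 0 < σ) (hτ : ε ≤ τ)
    (hτa : ∀ j, ∀ᵐ t ∂(volume.restrict (Icc 0 T)), |a t j| ≤ τ)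
    (hKν : ∀ j, ∀ᵐ x ∂((volume.restrict (Icc 0 T)).prod (volume.restrict (Icc 0 T))),
      ∑ i, |K x.1 x.2 i j| ≤ ν)
    (hK : ∀ i j, MemLp (fun x : ℝ × ℝ => K x.1 x.2 i j) ⊤
      ((volume.restrict (Icc 0 T)).prod (volume.restrict (Icc 0 T))))
    (hKnn : ∀ᵐ x ∂((volume.restrict (Icc 0 T)).prod (volume.restrict (Icc 0 T))),
      ∀ i j, 0 ≤ K x.1 x.2 i j)
    (hBσ : ∀ᵐ t ∂(volume.restrict (Icc 0 T)), ∀ i j, B t i j ≠ 0 → σ ≤ B t i j)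
    (w : ℝ → Fin p → ℝ)
    (hw : ∀ i, MemLp (fun t => w t i) ⊤ (volume.restrict (Icc 0 T)))
    (hwnn : ∀ᵐ t ∂(volume.restrict (Icc 0 T)), ∀ i, 0 ≤ w t i)
    (hwfeas : ∀ᵐ t ∂(volume.restrict (Icc 0 T)), ∀ j,
      a t j - ε + ∫ s in Icc t T, ∑ i, K s t i j * w s i
        ≤ ∑ i, B t i j * w t i) :
    -- ŵ_i(t) = min (w_i(t)) (ρ_ε(t)) is feasible for (DCLP_ε) and dominated by w and ρ_ε
    (∀ᵐ t ∂(volume.restrict (Icc 0 T)), ∀ i,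
      0 ≤ min (w t i) (((τ - ε) / σ) * Real.exp (ν * (T - t) / σ))) ∧
    (∀ᵐ t ∂(volume.restrict (Icc 0 T)), ∀ j,
      a t j - ε + ∫ s in Icc t T,
          ∑ i, K s t i j * min (w s i) (((τ - ε) / σ) * Real.exp (ν * (T - s) / σ))
        ≤ ∑ i, B t i j * min (w t i) (((τ - ε) / σ) * Real.exp (ν * (T - t) / σ))) ∧
    (∀ t : ℝ, ∀ i, min (w t i) (((τ - ε) / σ) * Real.exp (ν * (T - t) / σ)) ≤ w t i) ∧
    (∀ t : ℝ, ∀ i, min (w t i) (((τ - ε) / σ) * Real.exp (ν * (T - t) / σ))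
        ≤ ((τ - ε) / σ) * Real.exp (ν * (T - t) / σ)) := by
  have hρ0 : ∀ u : ℝ, 0 ≤ ((τ - ε) / σ) * Real.exp (ν * (T - u) / σ) := fun u =>
    mul_nonneg (div_nonneg (sub_nonneg.2 hτ) hσ.le) (Real.exp_pos _).le
  refine ⟨?_, ?_, fun t i => min_le_left _ _, fun t i => min_le_right _ _⟩
  · filter_upwards [hwnn] with t ht i using le_min (ht i) (hρ0 t)
  have hKmeas : ∀ᵐ t ∂(volume.restrict (Icc 0 T)), ∀ i j,
      AEStronglyMeasurable (fun s => K s t i j) (volume.restrict (Icc 0 T)) :=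
    ae_all_iff.2 fun i => ae_all_iff.2 fun j => (hK i j).1.prod_swap.prodMk_left
  filter_upwards [hwfeas, ae_all_iff.2 hτa, hBσ, hwnn, hKmeas,
    ae_all_iff.2 fun j => ae_ae_of_ae_prod_swap (hKν j), ae_ae_of_ae_prod_swap hKnn,
    ae_restrict_mem measurableSet_Icc] with t hfeas hat hBt hwt hKmt hKνt hK0t ⟨ht0, htT⟩ j
  have hsub : Icc t T ⊆ Icc 0 T := Icc_subset_Icc_left ht0
  obtain ⟨hle_w, hle_ρ⟩ := integral_sum_mul_min_le (μ := volume.restrict (Icc t T)) Finset.univ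
    (f := fun i s => K s t i j) (g := fun i s => w s i)
    (fun i _ => (hKmt i j).mono_set hsub)
    (ae_restrict_of_ae_restrict_of_subset hsub (hK0t.mono fun s hs i _ => hs i j))
    (ae_restrict_of_ae_restrict_of_subset hsub (hKνt j))
    (fun i _ => IntegrableOn.mono_set ((hw i).integrable le_top) hsub)
    (Continuous.integrableOn_Icc (by fun_prop)) (ae_of_all _ hρ0)
  rw [setIntegral_Icc_mul_exp_eq hσ.ne' htT] at hle_ρ
  have hmin := min_sum_mul_le_sum_mul_min Finset.univ hσ.le (fun i _ => hBt i j)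
    (fun i _ => hwt i) (hρ0 t)
  have hfeas_j := hfeas j
  have ha_le : a t j ≤ τ := (le_abs_self _).trans (hat j)
  exact (le_min (by linarith) (by linarith)).trans hmin

/-- Lemma 3.4: truncating a dual feasible solution by ρ_ε preserves feasibility. -/
theorem dual_truncation_feasible (T : ℝ) (hT : 0 < T) (p q : ℕ)
    (a : ℝ → Fin q → ℝ) (B : ℝ → Fin p → Fin q → ℝ)
    (K : ℝ → ℝ → Fin p → Fin q → ℝ)
    (ε σ τ ν : ℝ) (hσ : 0 < σ) (hν : 0 < ν) (hε : 0 ≤ ε) (hτ : ε ≤ τ)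
    (hτa : ∀ j, ∀ᵐ t ∂(volume.restrict (Icc 0 T)), |a t j| ≤ τ)
    (hKν : ∀ j, ∀ᵐ x ∂((volume.restrict (Icc 0 T)).prod (volume.restrict (Icc 0 T))),
      ∑ i, |K x.1 x.2 i j| ≤ ν)
    (hK : ∀ i j, MemLp (fun x : ℝ × ℝ => K x.1 x.2 i j) ⊤
      ((volume.restrict (Icc 0 T)).prod (volume.restrict (Icc 0 T))))
    (hKnn : ∀ᵐ x ∂((volume.restrict (Icc 0 T)).prod (volume.restrict (Icc 0 T))),
      ∀ i j, 0 ≤ K x.1 x.2 i j)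
    (hBpos : ∀ j, ∀ᵐ t ∂(volume.restrict (Icc 0 T)), 0 < ∑ i, B t i j)
    (hBσ : ∀ᵐ t ∂(volume.restrict (Icc 0 T)), ∀ i j, B t i j ≠ 0 → σ ≤ B t i j)
    (hBmeas : ∀ i j, MemLp (fun t => B t i j) ⊤ (volume.restrict (Icc 0 T)))
    (w : ℝ → Fin p → ℝ)
    (hw : ∀ i, MemLp (fun t => w t i) ⊤ (volume.restrict (Icc 0 T)))
    (hwnn : ∀ᵐ t ∂(volume.restrict (Icc 0 T)), ∀ i, 0 ≤ w t i)
    (hwfeas : ∀ᵐ t ∂(volume.restrict (Icc 0 T)), ∀ j,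
      a t j - ε + ∫ s in Icc t T, ∑ i, K s t i j * w s i
        ≤ ∑ i, B t i j * w t i) :
    -- ŵ_i(t) = min (w_i(t)) (ρ_ε(t)) is feasible for (DCLP_ε) and dominated by w and ρ_ε
    (∀ᵐ t ∂(volume.restrict (Icc 0 T)), ∀ i,
      0 ≤ min (w t i) (((τ - ε) / σ) * Real.exp (ν * (T - t) / σ))) ∧
    (∀ᵐ t ∂(volume.restrict (Icc 0 T)), ∀ j,
      a t j - ε + ∫ s in Icc t T,
          ∑ i, K s t i j * min (w s i) (((τ - ε) / σ) * Real.exp (ν * (T - s) / σ))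
        ≤ ∑ i, B t i j * min (w t i) (((τ - ε) / σ) * Real.exp (ν * (T - t) / σ))) ∧
    (∀ t : ℝ, ∀ i, min (w t i) (((τ - ε) / σ) * Real.exp (ν * (T - t) / σ)) ≤ w t i) ∧
    (∀ t : ℝ, ∀ i, min (w t i) (((τ - ε) / σ) * Real.exp (ν * (T - t) / σ))
        ≤ ((τ - ε) / σ) * Real.exp (ν * (T - t) / σ)) :=
  dual_truncation_feasible_general T p q a B K ε σ τ ν hσ hτ hτa hKν hK hKnn hBσ w hw hwnn hwfeas
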